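/- Characterisation of types: for any type T of the revised Vectorial Lambda Calculus, there exist n, m ∈ ℕ, scalars α₁,…,αₙ, β₁,…,βₘ, pairwise distinct unit types U₁,…,Uₙ and pairwise distinct general type variables 𝕏₁,…,𝕏ₘ such that T ≡ Σᵢ₌₁ⁿ αᵢ·Uᵢ + Σⱼ₌₁ᵐ βⱼ·𝕏ⱼ. -/

import Mathlib

/- Types of λvec_R: general types and unit types (mutual) -/
mutual
inductive UTy (S : Type) : Type where
  | uvar : ℕ → UTy S
  | arrow : UTy S → Ty S → UTy S
  | fallU : ℕ → UTy S → UTy S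
  | fallG : ℕ → UTy S → UTy S
inductive Ty (S : Type) : Type where
  | unit : UTy S → Ty S
  | smul : S → Ty S → Ty S
  | add : Ty S → Ty S → Ty S
  | gvar : ℕ → Ty S
end

/- Type equivalence: the smallest congruence with the weak-module axioms -/
mutual
inductive UEquiv {S : Type} [CommRing S] : UTy S → UTy S → Prop where
  | refl (U : UTy S) : UEquiv U U
  | symm : UEquiv U V → UEquiv V U
  | trans : UEquiv U V → UEquiv V W → UEquiv U W
  | arrow : UEquiv U V → TEquiv T R → UEquiv (.arrow U T) (.arrow V R)
  | fallU : UEquiv U V → UEquiv (.fallU X U) (.fallU X V)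
  | fallG : UEquiv U V → UEquiv (.fallG X U) (.fallG X V)
inductive TEquiv {S : Type} [CommRing S] : Ty S → Ty S → Prop where
  | refl (T : Ty S) : TEquiv T T
  | symm : TEquiv T R → TEquiv R T
  | trans : TEquiv T R → TEquiv R P → TEquiv T P
  | unit : UEquiv U V → TEquiv (.unit U) (.unit V)
  | smul : TEquiv T R → TEquiv (.smul a T) (.smul a R)
  | addL : TEquiv T R → TEquiv (.add T P) (.add R P)
  | addR : TEquiv T R → TEquiv (.add P T) (.add P R)
  | one_smul (T : Ty S) : TEquiv (.smul 1 T) T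
  | smul_smul : TEquiv (.smul a (.smul b T)) (.smul (a*b) T)
  | smul_add : TEquiv (.add (.smul a T) (.smul a R)) (.smul a (.add T R))
  | add_smul : TEquiv (.add (.smul a T) (.smul b T)) (.smul (a+b) T)
  | comm : TEquiv (.add T R) (.add R T)
  | assoc : TEquiv (.add T (.add R P)) (.add (.add T R) P)
end

/- substitution of a unit type variable by a unit type -/
mutual
def UTy.substU {S : Type} : UTy S → ℕ → UTy S → UTy S
  | .uvar m, X, A => if m = X then A else .uvar m
  | .arrow U T, X, A => .arrow (U.substU X A) (T.substU X A)
  | .fallU m U, X, A => if m = X then .fallU m U else .fallU m (U.substU X A)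
  | .fallG m U, X, A => .fallG m (U.substU X A)
def Ty.substU {S : Type} : Ty S → ℕ → UTy S → Ty S
  | .unit U, X, A => .unit (U.substU X A)
  | .smul a T, X, A => .smul a (T.substU X A)
  | .add T R, X, A => .add (T.substU X A) (R.substU X A)
  | .gvar m, _, _ => .gvar m
end

/- substitution of a general type variable by a general type -/
mutual
def UTy.substG {S : Type} : UTy S → ℕ → Ty S → UTy S
  | .uvar m, _, _ => .uvar m
  | .arrow U T, X, A => .arrow (U.substG X A) (T.substG X A)
  | .fallU m U, X, A => .fallU m (U.substG X A)
  | .fallG m U, X, A => if m = X then .fallG m U else .fallG m (U.substG X A)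
def Ty.substG {S : Type} : Ty S → ℕ → Ty S → Ty S
  | .unit U, X, A => .unit (U.substG X A)
  | .smul a T, X, A => .smul a (T.substG X A)
  | .add T R, X, A => .add (T.substG X A) (R.substG X A)
  | .gvar m, X, A => if m = X then A else .gvar m
end

/- free type variables; a variable is (false, n) for a unit variable X_n
   and (true, n) for a general variable 𝕏_n -/
mutual
def UTy.fv {S : Type} : UTy S → Set (Bool × ℕ)
  | .uvar n => {(false, n)}
  | .arrow U T => U.fv ∪ T.fv
  | .fallU n U => U.fv \ {(false, n)}
  | .fallG n U => U.fv \ {(true, n)}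
def Ty.fv {S : Type} : Ty S → Set (Bool × ℕ)
  | .unit U => U.fv
  | .smul _ T => T.fv
  | .add T R => T.fv ∪ R.fv
  | .gvar n => {(true, n)}
end
/- a single substitution item: a type variable together with a type of the matching kind -/
inductive TSub (S : Type) : Type where
  | u : ℕ → UTy S → TSub S
  | g : ℕ → Ty S → TSub S

def TSub.var {S : Type} : TSub S → Bool × ℕ
  | .u X _ => (false, X)
  | .g X _ => (true, X)

def Ty.applySub {S : Type} : Ty S → TSub S → Ty S
  | T, .u X A => T.substU X A
  | T, .g X A => T.substG X A

def UTy.applySub {S : Type} : UTy S → TSub S → UTy S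
  | U, .u X A => U.substU X A
  | U, .g X A => U.substG X A

def Ty.applySubs {S : Type} (T : Ty S) (σ : List (TSub S)) : Ty S := σ.foldl Ty.applySub T
def UTy.applySubs {S : Type} (U : UTy S) (σ : List (TSub S)) : UTy S := σ.foldl UTy.applySub U

/- ∀X.U for a variable of either kind, and iterated foralls -/
def mkForall {S : Type} (X : Bool × ℕ) (U : UTy S) : UTy S :=
  if X.1 then .fallG X.2 U else .fallU X.2 U
def mkForalls {S : Type} (Xs : List (Bool × ℕ)) (U : UTy S) : UTy S := Xs.foldr mkForall U

/- the linear combination Σᵢ αᵢ·Tᵢ represented by a (nonempty) list of pairs -/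
def combo {S : Type} : List (S × Ty S) → Ty S
  | [] => .gvar 0
  | [p] => .smul p.1 p.2
  | p :: q :: L => .add (.smul p.1 p.2) (combo (q :: L))

/- sum of the scalars of a linear combination -/
def weightOf {S : Type} [CommRing S] {α : Type} (L : List (S × α)) : S := (L.map Prod.fst).sum

/- Terms of λvec_R -/
inductive Term (S : Type) : Type where
  | var : ℕ → Term S
  | lam : ℕ → Term S → Term S
  | app : Term S → Term S → Term S
  | smul : S → Term S → Term S
  | add : Term S → Term S → Term S

/- basis terms: variables and abstractions -/
inductive IsBasis {S : Type} : Term S → Prop where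
  | var : IsBasis (.var x)
  | lam : IsBasis (.lam x t)

def Term.fv {S : Type} : Term S → Set ℕ
  | .var x => {x}
  | .lam x t => t.fv \ {x}
  | .app t r => t.fv ∪ r.fv
  | .smul _ t => t.fv
  | .add t r => t.fv ∪ r.fv

/- term substitution t[b/x] -/
def Term.subst {S : Type} : Term S → ℕ → Term S → Term S
  | .var y, x, b => if y = x then b else .var y
  | .lam y t, x, b => if y = x then .lam y t else .lam y (t.subst x b)
  | .app t r, x, b => .app (t.subst x b) (r.subst x b)
  | .smul a t, x, b => .smul a (t.subst x b)
  | .add t r, x, b => .add (t.subst x b) (r.subst x b)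

/- typing contexts: partial maps from term variables to unit types -/
def Ctx (S : Type) : Type := ℕ → Option (UTy S)

def Ctx.update {S : Type} (Γ : Ctx S) (x : ℕ) (U : UTy S) : Ctx S :=
  fun y => if y = x then some U else Γ y

def Ctx.fv {S : Type} (Γ : Ctx S) : Set (Bool × ℕ) :=
  {v | ∃ x U, Γ x = some U ∧ v ∈ UTy.fv U}

def Ctx.applySub {S : Type} (Γ : Ctx S) (s : TSub S) : Ctx S :=
  fun x => (Γ x).map (fun U => U.applySub s)
/- Sized typing judgement: `TypesN n Γ t T` means Γ ⊢ t : T has a derivation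
   with n sequents. -/
inductive TypesN {S : Type} [CommRing S] : ℕ → Ctx S → Term S → Ty S → Prop where
  | ax : Γ x = some U → TypesN 1 Γ (.var x) (.unit U)
  | equiv : TypesN n Γ t T → TEquiv T R → TypesN (n+1) Γ t R
  | arrI : TypesN n (Γ.update x U) t T → TypesN (n+1) Γ (.lam x t) (.unit (.arrow U T))
  | arrE (Xs : List (Bool × ℕ)) (U : UTy S) (L : List (S × Ty S)) (M : List (S × List (TSub S))) :
      L ≠ [] → M ≠ [] →
      (∀ q ∈ M, q.2.map TSub.var = Xs) →
      TypesN n Γ t (combo (L.map fun p => (p.1, Ty.unit (mkForalls Xs (.arrow U p.2))))) →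
      TypesN m Γ r (combo (M.map fun q => (q.1, (Ty.unit U).applySubs q.2))) →
      TypesN (n+m+1) Γ (.app t r)
        (combo (L.flatMap fun p => M.map fun q => (p.1 * q.1, p.2.applySubs q.2)))
  | fallI (L : List (S × UTy S)) (X : Bool × ℕ) :
      L ≠ [] → X ∉ Γ.fv →
      TypesN n Γ t (combo (L.map fun p => (p.1, Ty.unit p.2))) →
      TypesN (n+1) Γ t (combo (L.map fun p => (p.1, Ty.unit (mkForall X p.2))))
  | fallE (L : List (S × UTy S)) (s : TSub S) :
      L ≠ [] →
      TypesN n Γ t (combo (L.map fun p => (p.1, Ty.unit (mkForall s.var p.2)))) →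
      TypesN (n+1) Γ t (combo (L.map fun p => (p.1, (Ty.unit p.2).applySub s)))
  | addI : TypesN n Γ t T → TypesN m Γ r R → TypesN (n+m+1) Γ (.add t r) (.add T R)
  | oneE : TypesN n Γ (.smul 1 t) T → TypesN (n+1) Γ t T
  | sum (L : List (ℕ × S × Ty S)) :
      L ≠ [] →
      (∀ p ∈ L, TypesN p.1 Γ t p.2.2) →
      TypesN ((L.map Prod.fst).sum + 1) Γ (.smul (weightOf (L.map Prod.snd)) t)
        (combo (L.map Prod.snd))

/- the typing judgement Γ ⊢ t : T -/
def Types {S : Type} [CommRing S] (Γ : Ctx S) (t : Term S) (T : Ty S) : Prop :=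
  ∃ n, TypesN n Γ t T

/- the relation ≺_{X,Γ} -/
inductive Prec {S : Type} [CommRing S] (Γ : Ctx S) : (Bool × ℕ) → Ty S → Ty S → Prop where
  | intro (X : Bool × ℕ) (L : List (S × UTy S)) :
      X ∉ Γ.fv → L ≠ [] →
      TEquiv R (combo (L.map fun p => (p.1, Ty.unit p.2))) →
      TEquiv T (combo (L.map fun p => (p.1, Ty.unit (mkForall X p.2)))) →
      Prec Γ X R T
  | elim (s : TSub S) (L : List (S × UTy S)) :
      s.var ∉ Γ.fv → L ≠ [] →
      TEquiv R (combo (L.map fun p => (p.1, Ty.unit (mkForall s.var p.2)))) →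
      TEquiv T (combo (L.map fun p => (p.1, (Ty.unit p.2).applySub s))) →
      Prec Γ s.var R T

/- the relation ⪯_{𝒱,Γ} -/
inductive Preceq {S : Type} [CommRing S] (Γ : Ctx S) : Set (Bool × ℕ) → Ty S → Ty S → Prop where
  | prec : V ∩ Γ.fv = ∅ → Prec Γ X R T → Preceq Γ (V ∪ {X}) R T
  | trans : Preceq Γ V₁ A B → Preceq Γ V₂ B C → Preceq Γ (V₁ ∪ V₂) A C
  | equiv : V ∩ Γ.fv = ∅ → TEquiv R T → Preceq Γ V R T

/- the reduction relation → -/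
inductive Step {S : Type} [CommRing S] : Term S → Term S → Prop where
  -- Group E
  | oneSmul : Step (.smul 1 t) t
  | smulSmul : Step (.smul a (.smul b t)) (.smul (a*b) t)
  | smulAdd : Step (.smul a (.add t r)) (.add (.smul a t) (.smul a r))
  -- Group F
  | factor : Step (.add (.smul a t) (.smul b t)) (.smul (a+b) t)
  | factorOne : Step (.add (.smul a t) t) (.smul (a+1) t)
  | factorNone : Step (.add t t) (.smul (1+1) t)
  -- Group B
  | beta : IsBasis b → Step (.app (.lam x t) b) (t.subst x b)
  -- Group A
  | appAddL : Step (.app (.add t r) u) (.add (.app t u) (.app r u))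
  | appAddR : Step (.app t (.add r u)) (.add (.app t r) (.app t u))
  | appSmulL : Step (.app (.smul a t) r) (.smul a (.app t r))
  | appSmulR : Step (.app t (.smul a r)) (.smul a (.app t r))
  -- contextual rules
  | ctxSmul : Step t r → Step (.smul a t) (.smul a r)
  | ctxAddR : Step t r → Step (.add u t) (.add u r)
  | ctxAppR : Step t r → Step (.app u t) (.app u r)
  | ctxAppL : Step t r → Step (.app t u) (.app r u)
  | ctxLam : Step t r → Step (.lam x t) (.lam x r)

/- values: sums (in any association) of pairwise-distinct abstractions, possibly scaled -/
inductive SumOf {S : Type} : Term S → List (Term S) → Prop where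
  | leaf (t : Term S) : SumOf t [t]
  | add : SumOf t L → SumOf r M → SumOf (.add t r) (L ++ M)

inductive VEntry {S : Type} : Term S → Prop where
  | lam : VEntry (.lam x t)
  | smul : VEntry (.smul a (.lam x t))

def lamOf {S : Type} : Term S → Term S
  | .smul _ b => b
  | b => b

def IsValue {S : Type} (t : Term S) : Prop :=
  ∃ L : List (Term S), SumOf t L ∧ (∀ e ∈ L, VEntry e) ∧ (L.map lamOf).Pairwise (· ≠ ·)

/- weight of types and of terms -/
def Ty.weight {S : Type} [CommRing S] : Ty S → S
  | .unit _ => 1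
  | .gvar _ => 1
  | .smul a T => a * T.weight
  | .add T R => T.weight + R.weight

def Term.weight {S : Type} [CommRing S] : Term S → S
  | .var _ => 1
  | .lam _ _ => 1
  | .app _ _ => 1
  | .smul a t => a * t.weight
  | .add t r => t.weight + r.weight

/-!
Distributing scalars over sums and reassociating turns every type into a nonempty linear
combination of atoms, i.e. of unit types and general type variables. Commutativity and
associativity of `+` make the order of the summands irrelevant, so repeated atoms can be brought
next to each other and merged by `α·A + β·A ≡ (α+β)·A`.
-/

section Combo

variable {S : Type}

lemma combo_cons (p : S × Ty S) {M : List (S × Ty S)} (hM : M ≠ []) :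
    combo (p :: M) = .add (.smul p.1 p.2) (combo M) := by
  cases M with
  | nil => exact absurd rfl hM
  | cons q M => rfl

variable [CommRing S]

lemma combo_cons_congr (p : S × Ty S) {M M' : List (S × Ty S)} (hM : M ≠ []) (hM' : M' ≠ [])
    (e : TEquiv (combo M) (combo M')) : TEquiv (combo (p :: M)) (combo (p :: M')) := by
  rw [combo_cons p hM, combo_cons p hM']
  exact .addR e

lemma combo_perm {L M : List (S × Ty S)} (h : L.Perm M) : TEquiv (combo L) (combo M) := by
  induction h with
  | nil => exact .refl _
  | @cons p l₁ l₂ h ih =>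
    by_cases hl₁ : l₁ = []
    · subst hl₁
      rw [h.nil_eq]
      exact .refl _
    · exact combo_cons_congr p hl₁ (by rintro rfl; exact hl₁ h.eq_nil) ih
  | swap p q l =>
    cases l with
    | nil => exact .comm
    | cons r l => exact .trans .assoc (.trans (.addL .comm) (.symm .assoc))
  | trans _ _ ih₁ ih₂ => exact ih₁.trans ih₂

lemma combo_append : ∀ {L M : List (S × Ty S)}, L ≠ [] → M ≠ [] →
    TEquiv (combo (L ++ M)) (.add (combo L) (combo M))
  | [], _, hL, _ => absurd rfl hL
  | [p], _, _, hM => by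
    rw [List.singleton_append, combo_cons p hM]
    exact .refl _
  | p :: q :: L, M, _, hM => by
    rw [List.cons_append, combo_cons p (by simp), combo_cons p (by simp)]
    exact .trans (.addR (combo_append (by simp) hM)) .assoc

lemma smul_combo (a : S) : ∀ {L : List (S × Ty S)}, L ≠ [] →
    TEquiv (.smul a (combo L)) (combo (L.map fun p => (a * p.1, p.2)))
  | [], hL => absurd rfl hL
  | [_], _ => .smul_smul
  | p :: q :: L, _ =>
    .trans (.symm .smul_add)
      (.trans (.addL .smul_smul) (.addR (smul_combo a (L := q :: L) (by simp))))

lemma combo_merge (a b : S) (T : Ty S) (M : List (S × Ty S)) :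
    TEquiv (combo ((a, T) :: (b, T) :: M)) (combo ((a + b, T) :: M)) := by
  cases M with
  | nil => exact .add_smul
  | cons q M => exact .trans .assoc (.addL .add_smul)

end Combo

def comboOf {S α : Type} (f : α → Ty S) (L : List (S × α)) : Ty S :=
  combo (L.map fun p => (p.1, f p.2))

section ComboOf

variable {S α : Type} [CommRing S] (f : α → Ty S)

lemma comboOf_cons_congr (p : S × α) {M M' : List (S × α)} (hM : M ≠ []) (hM' : M' ≠ [])
    (e : TEquiv (comboOf f M) (comboOf f M')) : TEquiv (comboOf f (p :: M)) (comboOf f (p :: M')) :=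
  combo_cons_congr _ (by simpa using hM) (by simpa using hM') e

lemma comboOf_perm {L M : List (S × α)} (h : L.Perm M) : TEquiv (comboOf f L) (comboOf f M) :=
  combo_perm (h.map _)

lemma add_comboOf {L M : List (S × α)} (hL : L ≠ []) (hM : M ≠ []) :
    TEquiv (.add (comboOf f L) (comboOf f M)) (comboOf f (L ++ M)) := by
  unfold comboOf
  rw [List.map_append]
  exact .symm (combo_append (by simpa using hL) (by simpa using hM))

lemma smul_comboOf (a : S) {L : List (S × α)} (hL : L ≠ []) :
    TEquiv (.smul a (comboOf f L)) (comboOf f (L.map fun p => (a * p.1, p.2))) := by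
  have := smul_combo a (L := L.map fun p => (p.1, f p.2)) (by simpa using hL)
  unfold comboOf
  rw [List.map_map] at this ⊢
  exact this

lemma comboOf_merge (a b : S) (x : α) (M : List (S × α)) :
    TEquiv (comboOf f ((a, x) :: (b, x) :: M)) (comboOf f ((a + b, x) :: M)) :=
  combo_merge a b (f x) _

theorem exists_nodup_comboOf_equiv : ∀ {L : List (S × α)}, L ≠ [] →
    ∃ L' : List (S × α), L' ≠ [] ∧ (L'.map Prod.snd).Nodup ∧
      TEquiv (comboOf f L) (comboOf f L')
  | [], hL => absurd rfl hL
  | [p], _ => ⟨[p], by simp, by simp, .refl _⟩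
  | (a, x) :: q :: L, _ => by
    classical
    obtain ⟨R, hR, hRnodup, hLR⟩ := exists_nodup_comboOf_equiv (L := q :: L) (by simp)
    have hcons := comboOf_cons_congr f (a, x) (by simp) hR hLR
    by_cases hx : x ∈ R.map Prod.snd
    · obtain ⟨b, hbR⟩ : ∃ b, (b, x) ∈ R := by simpa using hx
      have hperm := List.perm_cons_erase hbR
      refine ⟨(a + b, x) :: R.erase (b, x), by simp, ?_, ?_⟩
      · simpa using (hperm.map Prod.snd).nodup_iff.1 hRnodup
      · exact hcons.trans ((comboOf_perm f (hperm.cons _)).trans (comboOf_merge f a b x _))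
    · exact ⟨(a, x) :: R, by simp, List.nodup_cons.2 ⟨hx, hRnodup⟩, hcons⟩

end ComboOf

section SumParts

variable {σ α β : Type}

def leftPart : List (σ × (α ⊕ β)) → List (σ × α)
  | [] => []
  | (s, .inl x) :: L => (s, x) :: leftPart L
  | (_, .inr _) :: L => leftPart L

def rightPart : List (σ × (α ⊕ β)) → List (σ × β)
  | [] => []
  | (_, .inl _) :: L => rightPart L
  | (s, .inr y) :: L => (s, y) :: rightPart L

lemma map_snd_leftPart (L : List (σ × (α ⊕ β))) :
    (leftPart L).map Prod.snd = (L.map Prod.snd).filterMap Sum.getLeft? := by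
  induction L with
  | nil => rfl
  | cons p L ih => rcases p with ⟨s, x | y⟩ <;> simp [leftPart, ih, List.filterMap_cons]

lemma map_snd_rightPart (L : List (σ × (α ⊕ β))) :
    (rightPart L).map Prod.snd = (L.map Prod.snd).filterMap Sum.getRight? := by
  induction L with
  | nil => rfl
  | cons p L ih => rcases p with ⟨s, x | y⟩ <;> simp [rightPart, ih, List.filterMap_cons]

lemma nodup_map_snd_leftPart {L : List (σ × (α ⊕ β))} (h : (L.map Prod.snd).Nodup) :
    ((leftPart L).map Prod.snd).Nodup := by
  rw [map_snd_leftPart]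
  exact h.filterMap fun a a' x ha ha' => by simp_all

lemma nodup_map_snd_rightPart {L : List (σ × (α ⊕ β))} (h : (L.map Prod.snd).Nodup) :
    ((rightPart L).map Prod.snd).Nodup := by
  rw [map_snd_rightPart]
  exact h.filterMap fun a a' y ha ha' => by simp_all

lemma perm_leftPart_append_rightPart {γ : Type} (f : α → γ) (g : β → γ)
    (L : List (σ × (α ⊕ β))) :
    (L.map fun p => (p.1, Sum.elim f g p.2)).Perm
      ((leftPart L).map (fun p => (p.1, f p.2)) ++ (rightPart L).map (fun p => (p.1, g p.2))) := by
  induction L with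
  | nil => exact .nil
  | cons p L ih =>
    rcases p with ⟨s, x | y⟩
    · simpa [leftPart, rightPart] using ih
    · simpa [leftPart, rightPart] using (ih.cons _).trans List.perm_middle.symm

end SumParts

def atom {S : Type} : UTy S ⊕ ℕ → Ty S :=
  Sum.elim Ty.unit Ty.gvar

theorem exists_comboOf_atom_equiv {S : Type} [CommRing S] :
    ∀ T : Ty S, ∃ L : List (S × (UTy S ⊕ ℕ)), L ≠ [] ∧ TEquiv T (comboOf atom L)
  | .unit U => ⟨[(1, .inl U)], by simp, .symm (.one_smul _)⟩
  | .gvar n => ⟨[(1, .inr n)], by simp, .symm (.one_smul _)⟩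
  | .smul a T => by
    obtain ⟨L, hL, hT⟩ := exists_comboOf_atom_equiv T
    exact ⟨L.map fun p => (a * p.1, p.2), by simpa using hL,
      (TEquiv.smul hT).trans (smul_comboOf atom a hL)⟩
  | .add T R => by
    obtain ⟨L, hL, hT⟩ := exists_comboOf_atom_equiv T
    obtain ⟨M, hM, hR⟩ := exists_comboOf_atom_equiv R
    exact ⟨L ++ M, by simp [hL],
      ((TEquiv.addL hT).trans (.addR hR)).trans (add_comboOf atom hL hM)⟩

theorem characterisation_of_types {S : Type} [CommRing S] (T : Ty S) :
    ∃ (Lu : List (S × UTy S)) (Lx : List (S × ℕ)),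
      (Lu.map Prod.snd).Pairwise (· ≠ ·) ∧
      (Lx.map Prod.snd).Pairwise (· ≠ ·) ∧
      (Lu ≠ [] ∨ Lx ≠ []) ∧
      TEquiv T (combo ((Lu.map fun p => (p.1, Ty.unit p.2)) ++
                       (Lx.map fun q => (q.1, Ty.gvar q.2)))) := by
  obtain ⟨L, hL, hTL⟩ := exists_comboOf_atom_equiv T
  obtain ⟨L', hL', hnodup, hLL'⟩ := exists_nodup_comboOf_equiv atom hL
  have hperm := perm_leftPart_append_rightPart Ty.unit Ty.gvar L'
  refine ⟨leftPart L', rightPart L', nodup_map_snd_leftPart hnodup,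
    nodup_map_snd_rightPart hnodup, ?_, hTL.trans (hLL'.trans (combo_perm hperm))⟩
  by_contra! h
  rw [h.1, h.2] at hperm
  exact hL' (by simpa using hperm.eq_nil)
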